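/- Every monoid that is word-hyperbolic (as a semigroup, with respect to a regular combing R ⊆ A^+) is 1-extendable. -/

import Mathlib

/-!
Let `e` be the identity of `S` and `w ∈ R` a representative of it. An entry `u #₁ v #₂ xʳ` of
the multiplication table of `S¹` over `R ∪ {ε}` either lies in the table of `S` over `R`, or is
obtained from one of its entries by erasing `w` from the first block (when `u = ε`), from the
second block (when `v = ε`), or from all three blocks (when `x = ε`, which forces `u = v = ε`).
This erasure is a finite-state transduction, and context-free languages are closed under
finite-state transductions: the grammar with nonterminals `(p, X, q)`, standing for the words
derived from `X` that the transducer reads from state `p` to state `q`, generates the image.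
-/

/-- Evaluation of a word over `A` in `S^1` (the semigroup `S` with a new identity
adjoined), where `f : A → S`. The empty word evaluates to the adjoined identity,
and a nonempty word to the product of its letters in `S`. -/
def evalW {A S : Type*} [Semigroup S] (f : A → S) (w : List A) : WithOne S :=
  (w.map (fun a => (f a : WithOne S))).prod

/-- The multiplication table of a semigroup with respect to a combing `R`, with
equality interpreted in `S^1` (which agrees with equality in `S` for nonempty
words, and lets `ε` represent the adjoined identity). The alphabet is `A ⊕ Bool`,
where `Sum.inr false` plays the role of `#1` and `Sum.inr true` of `#2`. -/
def tableS {A S : Type*} [Semigroup S] (f : A → S) (R : Language A) :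
    Language (A ⊕ Bool) :=
  {w | ∃ u v x : List A, u ∈ R ∧ v ∈ R ∧ x ∈ R ∧
    evalW f (u ++ v) = evalW f x ∧
    w = u.map Sum.inl ++ [Sum.inr false] ++ v.map Sum.inl ++ [Sum.inr true] ++
      (x.map Sum.inl).reverse}

theorem Language.isRegular_one {T : Type*} : (1 : Language T).IsRegular := by
  refine ⟨Bool, inferInstance, ⟨fun _ _ => false, true, {true}⟩, ?_⟩
  ext (_ | ⟨a, w⟩)
  · simp [DFA.mem_accepts, Language.mem_one]
  · have hfalse : ∀ b, DFA.evalFrom ⟨fun _ _ => false, true, {true}⟩ b (a :: w) = false := by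
      intro b
      induction w generalizing b <;> simp_all [DFA.evalFrom]
    simp [DFA.mem_accepts, DFA.eval, Language.mem_one, hfalse]

theorem List.exists_eq_append_of_append_cons_eq {α : Type*} {l₁ l₂ t₁ t₂ : List α} {x : α}
    (hx : x ∉ l₁) (h : t₁ ++ x :: t₂ = l₁ ++ l₂) : ∃ t, t₁ = l₁ ++ t ∧ l₂ = t ++ x :: t₂ := by
  rcases List.append_eq_append_iff.1 h with ⟨c, rfl, h'⟩ | ⟨c, rfl, h'⟩
  · cases c with
    | nil => exact ⟨[], by simp, by simpa using h'.symm⟩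
    | cons y c =>
      obtain ⟨rfl, -⟩ := List.cons_eq_cons.1 h'
      simp at hx
  · exact ⟨c, rfl, h'⟩

theorem List.drop_eq_cons_iff {α : Type*} {l m : List α} {i : ℕ} {a : α} :
    l.drop i = a :: m ↔ l[i]? = some a ∧ l.drop (i + 1) = m := by
  rw [List.drop_add_one_eq_tail_drop, ← List.head?_drop]
  cases l.drop i <;> simp

structure Transducer (T U Q : Type*) where
  step : Q → T → List (List U × Q)
  start : Set Q
  accept : Set Q

namespace Transducer

section Runs

variable {T U Q : Type*} (M : Transducer T U Q)

inductive Run : Q → List T → List U → Q → Prop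
  | nil (q : Q) : Run q [] [] q
  | cons {p q r : Q} {a : T} {o : List U} {w : List T} {y : List U} :
      (o, q) ∈ M.step p a → Run q w y r → Run p (a :: w) (o ++ y) r

def Transduces (w : List T) (y : List U) : Prop :=
  ∃ p ∈ M.start, ∃ q ∈ M.accept, M.Run p w y q

def image (L : Language T) : Language U :=
  {y | ∃ w ∈ L, M.Transduces w y}

variable {M} {p q r : Q}

theorem mem_image {L : Language T} {y : List U} :
    y ∈ M.image L ↔ ∃ w ∈ L, M.Transduces w y :=
  Iff.rfl

theorem run_nil_iff {y : List U} : M.Run p [] y q ↔ y = [] ∧ q = p := by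
  constructor
  · rintro ⟨⟩; exact ⟨rfl, rfl⟩
  · rintro ⟨rfl, rfl⟩; exact .nil _

theorem run_cons_iff {a : T} {w : List T} {y : List U} :
    M.Run p (a :: w) y r ↔ ∃ o q y', (o, q) ∈ M.step p a ∧ M.Run q w y' r ∧ y = o ++ y' := by
  constructor
  · rintro (_ | ⟨hstep, hrun⟩); exact ⟨_, _, _, hstep, hrun, rfl⟩
  · rintro ⟨o, q, y', hstep, hrun, rfl⟩; exact .cons hstep hrun

theorem run_append_iff {w₁ w₂ : List T} {y : List U} :
    M.Run p (w₁ ++ w₂) y r ↔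
      ∃ q y₁ y₂, M.Run p w₁ y₁ q ∧ M.Run q w₂ y₂ r ∧ y = y₁ ++ y₂ := by
  induction w₁ generalizing p y with
  | nil => simp [run_nil_iff]
  | cons a w₁ ih =>
    simp only [List.cons_append, run_cons_iff, ih]
    constructor
    · rintro ⟨o, q', _, hstep, ⟨q, y₁, y₂, hrun₁, hrun₂, rfl⟩, rfl⟩
      exact ⟨q, o ++ y₁, y₂, ⟨o, q', y₁, hstep, hrun₁, rfl⟩, hrun₂, by simp⟩
    · rintro ⟨q, _, y₂, ⟨o, q', y₁, hstep, hrun₁, rfl⟩, hrun₂, rfl⟩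
      exact ⟨o, q', y₁ ++ y₂, hstep, ⟨q, y₁, y₂, hrun₁, hrun₂, rfl⟩, by simp⟩

end Runs

section Annotations

variable {T U Q N : Type*} (M : Transducer T U Q)

/- `Annotates p s t q`: `t` is the sentential form `s` rewritten along a run from `p` to `q`;
terminals become their outputs, and a nonterminal `X` becomes `(p', X, q')`, a guess of the
states around the subword it will derive. -/
inductive Annotates : Q → List (Symbol T N) → List (Symbol U (Option (Q × N × Q))) → Q → Prop
  | nil (p : Q) : Annotates p [] [] p
  | terminal {p q r : Q} {a : T} {o : List U} {s t} :
      (o, q) ∈ M.step p a → Annotates q s t r →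
        Annotates p (.terminal a :: s) (o.map .terminal ++ t) r
  | nonterminal {p q r : Q} (X : N) {s t} :
      Annotates q s t r → Annotates p (.nonterminal X :: s) (.nonterminal (some (p, X, q)) :: t) r

variable {M} {p q r : Q} {s s₁ s₂ : List (Symbol T N)}
  {t t₁ t₂ : List (Symbol U (Option (Q × N × Q)))}

theorem annotates_nil_iff : M.Annotates p ([] : List (Symbol T N)) t q ↔ t = [] ∧ q = p := by
  constructor
  · rintro ⟨⟩; exact ⟨rfl, rfl⟩
  · rintro ⟨rfl, rfl⟩; exact .nil _

theorem Annotates.append (h₁ : M.Annotates p s₁ t₁ q) (h₂ : M.Annotates q s₂ t₂ r) :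
    M.Annotates p (s₁ ++ s₂) (t₁ ++ t₂) r := by
  induction h₁ with
  | nil => exact h₂
  | terminal hstep _ ih => simpa using Annotates.terminal hstep (ih h₂)
  | nonterminal X _ ih => exact .nonterminal X (ih h₂)

theorem Annotates.split (h : M.Annotates p (s₁ ++ s₂) t r) :
    ∃ q t₁ t₂, M.Annotates p s₁ t₁ q ∧ M.Annotates q s₂ t₂ r ∧ t = t₁ ++ t₂ := by
  induction s₁ generalizing p t with
  | nil => exact ⟨p, [], t, .nil p, h, rfl⟩
  | cons x s₁ ih =>
    cases h with
    | terminal hstep h =>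
      obtain ⟨q, t₁, t₂, h₁, h₂, rfl⟩ := ih h
      exact ⟨q, _, t₂, .terminal hstep h₁, h₂, by simp⟩
    | nonterminal X h =>
      obtain ⟨q, t₁, t₂, h₁, h₂, rfl⟩ := ih h
      exact ⟨q, _, t₂, .nonterminal X h₁, h₂, rfl⟩

theorem annotates_singleton_iff {X : N} :
    M.Annotates p [.nonterminal X] t q ↔ t = [.nonterminal (some (p, X, q))] := by
  constructor
  · rintro (_ | _ | ⟨_, h⟩)
    obtain ⟨rfl, rfl⟩ := annotates_nil_iff.1 h
    rfl
  · rintro rfl; exact .nonterminal X (.nil q)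

theorem Run.annotates {w : List T} {y : List U} (h : M.Run p w y q) :
    M.Annotates p (w.map .terminal : List (Symbol T N)) (y.map .terminal) q := by
  induction h with
  | nil q => exact .nil q
  | cons hstep _ ih => simpa using Annotates.terminal hstep ih

theorem Annotates.exists_run {y : List U} (h : M.Annotates p s (y.map .terminal) q) :
    ∃ w : List T, s = w.map .terminal ∧ M.Run p w y q := by
  generalize ht : y.map Symbol.terminal = t at h
  induction h generalizing y with
  | nil p =>
    obtain rfl : y = [] := List.map_eq_nil_iff.1 ht
    exact ⟨[], rfl, .nil p⟩
  | @terminal p q r a o s t hstep h ih =>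
    obtain ⟨y₁, y₂, rfl, hy₁, hy₂⟩ := List.map_eq_append_iff.1 ht
    obtain rfl : y₁ = o := List.map_injective_iff.2 (fun _ _ => Symbol.terminal.inj) hy₁
    obtain ⟨w, rfl, hrun⟩ := ih hy₂
    exact ⟨a :: w, rfl, .cons hstep hrun⟩
  | nonterminal X _ _ => cases y <;> simp at ht

theorem Annotates.split_nonterminal {ν : Option (Q × N × Q)}
    (h : M.Annotates p s (t₁ ++ .nonterminal ν :: t₂) r) :
    ∃ s₁ X s₂ q₁ q₂, s = s₁ ++ .nonterminal X :: s₂ ∧ ν = some (q₁, X, q₂) ∧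
      M.Annotates p s₁ t₁ q₁ ∧ M.Annotates q₂ s₂ t₂ r := by
  generalize ht : t₁ ++ .nonterminal ν :: t₂ = t at h
  induction h generalizing t₁ with
  | nil => simp at ht
  | @terminal p q r a o s t hstep h ih =>
    have hν : Symbol.nonterminal ν ∉ o.map Symbol.terminal := by simp
    obtain ⟨t₁', rfl, rfl⟩ := List.exists_eq_append_of_append_cons_eq hν ht
    obtain ⟨s₁, X, s₂, q₁, q₂, rfl, rfl, h₁, h₂⟩ := ih rfl
    exact ⟨.terminal a :: s₁, X, s₂, q₁, q₂, rfl, rfl, by simpa using .terminal hstep h₁, h₂⟩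
  | @nonterminal p q r X s t h ih =>
    cases t₁ with
    | nil =>
      simp only [List.nil_append, List.cons.injEq, Symbol.nonterminal.injEq] at ht
      obtain ⟨rfl, rfl⟩ := ht
      exact ⟨[], X, s, p, q, rfl, rfl, .nil p, h⟩
    | cons x t₁ =>
      simp only [List.cons_append, List.cons.injEq] at ht
      obtain ⟨rfl, ht⟩ := ht
      obtain ⟨s₁, X', s₂, q₁, q₂, rfl, rfl, h₁, h₂⟩ := ih ht
      exact ⟨.nonterminal X :: s₁, X', s₂, q₁, q₂, rfl, rfl, .nonterminal X h₁, h₂⟩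

theorem annotates_finite [Finite Q] (p : Q) (s : List (Symbol T N)) :
    {x : List (Symbol U (Option (Q × N × Q))) × Q | M.Annotates p s x.1 x.2}.Finite := by
  induction s generalizing p with
  | nil => exact (Set.finite_singleton ([], p)).subset (by rintro ⟨t, q⟩ ⟨⟩; rfl)
  | cons x s ih =>
    cases x with
    | terminal a =>
      refine (((M.step p a).finite_toSet).biUnion fun oq _ =>
        (ih oq.2).image fun x => (oq.1.map .terminal ++ x.1, x.2)).subset ?_
      rintro ⟨_, r⟩ (_ | @⟨_, q, _, _, o, _, t, hstep, h⟩)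
      exact Set.mem_biUnion (x := (o, q)) hstep ⟨(t, r), h, rfl⟩
    | nonterminal X =>
      refine (Set.finite_iUnion fun q =>
        (ih q).image fun x => (.nonterminal (some (p, X, q)) :: x.1, x.2)).subset ?_
      rintro ⟨_, r⟩ (_ | _ | @⟨_, q, _, _, _, t, h⟩)
      exact Set.mem_iUnion.2 ⟨q, (t, r), h, rfl⟩

end Annotations

section Grammar

variable {T U : Type*} {Q : Type} (M : Transducer T U Q) (g : ContextFreeGrammar T)

def productRules : Set (ContextFreeRule U (Option (Q × g.NT × Q))) :=
  {r | (∃ p ∈ M.start, ∃ q ∈ M.accept, r = ⟨none, [.nonterminal (some (p, g.initial, q))]⟩) ∨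
    ∃ r₀ ∈ g.rules, ∃ p t q, M.Annotates p r₀.output t q ∧ r = ⟨some (p, r₀.input, q), t⟩}

theorem productRules_finite [Finite Q] : (M.productRules g).Finite := by
  refine ((Set.finite_range fun pq : Q × Q =>
    (⟨none, [.nonterminal (some (pq.1, g.initial, pq.2))]⟩ : ContextFreeRule U _)).union
    ((g.rules.finite_toSet.biUnion fun r₀ _ => Set.finite_iUnion fun p =>
      (M.annotates_finite p r₀.output).image fun x =>
        (⟨some (p, r₀.input, x.2), x.1⟩ : ContextFreeRule U _)))).subset ?_
  rintro _ (⟨p, -, q, -, rfl⟩ | ⟨r₀, hr₀, p, t, q, h, rfl⟩)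
  · exact Or.inl ⟨(p, q), rfl⟩
  · exact Or.inr (Set.mem_biUnion hr₀ (Set.mem_iUnion.2 ⟨p, (t, q), h, rfl⟩))

noncomputable def productGrammar [Finite Q] : ContextFreeGrammar U where
  NT := Option (Q × g.NT × Q)
  initial := none
  rules := (M.productRules_finite g).toFinset

variable {M g} [Finite Q]

theorem mem_productGrammar_rules {r : ContextFreeRule U (Option (Q × g.NT × Q))} :
    r ∈ (M.productGrammar g).rules ↔ r ∈ M.productRules g :=
  Set.Finite.mem_toFinset _

theorem derives_productGrammar_of_run {s : List (Symbol T g.NT)} {w : List T}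
    (hder : g.Derives s (w.map .terminal)) {p q : Q} {y : List U} (hrun : M.Run p w y q) :
    ∃ t, M.Annotates p s t q ∧ (M.productGrammar g).Derives t (y.map .terminal) := by
  induction hder using Relation.ReflTransGen.head_induction_on generalizing p q y with
  | refl => exact ⟨_, hrun.annotates, .refl _⟩
  | head hprod _ ih =>
    obtain ⟨t, ht, hder⟩ := ih hrun
    obtain ⟨r₀, hr₀, hrw⟩ := hprod
    obtain ⟨l, l', rfl, rfl⟩ := hrw.exists_parts
    obtain ⟨q₂, t', tr, ht', htr, rfl⟩ := ht.split
    obtain ⟨q₁, tl, tout, htl, htout, rfl⟩ := ht'.split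
    refine ⟨tl ++ [.nonterminal (some (q₁, r₀.input, q₂))] ++ tr,
      (htl.append (annotates_singleton_iff.2 rfl)).append htr, .head ?_ hder⟩
    exact ⟨⟨some (q₁, r₀.input, q₂), tout⟩,
      mem_productGrammar_rules.2 (Or.inr ⟨r₀, hr₀, q₁, tout, q₂, htout, rfl⟩),
      ContextFreeRule.rewrites_of_exists_parts _ tl tr⟩

theorem run_of_derives_productGrammar {t : List (Symbol U (M.productGrammar g).NT)} {y : List U}
    (hder : (M.productGrammar g).Derives t (y.map .terminal)) {p q : Q}
    {s : List (Symbol T g.NT)} (ht : M.Annotates p s t q) :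
    ∃ w, g.Derives s (w.map .terminal) ∧ M.Run p w y q := by
  induction hder using Relation.ReflTransGen.head_induction_on generalizing p q s with
  | refl =>
    obtain ⟨w, rfl, hrun⟩ := ht.exists_run
    exact ⟨w, .refl _, hrun⟩
  | head hprod _ ih =>
    obtain ⟨r, hr, hrw⟩ := hprod
    obtain ⟨tl, tr, rfl, rfl⟩ := hrw.exists_parts
    rw [List.append_assoc, List.singleton_append] at ht
    obtain ⟨sl, X, sr, q₁, q₂, rfl, hX, hsl, hsr⟩ := ht.split_nonterminal
    rcases mem_productGrammar_rules.1 hr with ⟨_, -, _, -, rfl⟩ | ⟨r₀, hr₀, p', t₀, q', hr₀t, rfl⟩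
    · cases hX
    · simp only [Option.some.injEq, Prod.mk.injEq] at hX
      obtain ⟨rfl, rfl, rfl⟩ := hX
      obtain ⟨w, hder, hrun⟩ := ih ((hsl.append hr₀t).append hsr)
      refine ⟨w, .head ⟨r₀, hr₀, ?_⟩ hder, hrun⟩
      simpa using ContextFreeRule.rewrites_of_exists_parts r₀ sl sr

theorem language_productGrammar : (M.productGrammar g).language = M.image g.language := by
  ext y
  rw [ContextFreeGrammar.mem_language_iff, mem_image]
  constructor
  · intro hder
    rcases hder.eq_or_head with heq | ⟨t, ⟨r, hr, hrw⟩, hder⟩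
    · cases y <;> simp at heq
    · obtain ⟨_, _⟩ := r
      rcases hrw with _ | ⟨_, ⟨⟩⟩
      rcases mem_productGrammar_rules.1 hr with ⟨p, hp, q, hq, h⟩ | ⟨_, -, _, _, _, -, h⟩
      · cases h
        obtain ⟨w, hw, hrun⟩ :=
          run_of_derives_productGrammar (by rwa [List.append_nil] at hder)
            (annotates_singleton_iff.2 rfl)
        exact ⟨w, hw, p, hp, q, hq, hrun⟩
      · cases h
  · rintro ⟨w, hw, p, hp, q, hq, hrun⟩
    obtain ⟨t, ht, hder⟩ := derives_productGrammar_of_run hw hrun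
    rw [annotates_singleton_iff.1 ht] at hder
    refine .head ⟨_, mem_productGrammar_rules.2 (Or.inl ⟨p, hp, q, hq, rfl⟩), ?_⟩ hder
    exact ContextFreeRule.Rewrites.input_output

end Grammar

theorem isContextFree_image {T U : Type*} {Q : Type} [Finite Q] (M : Transducer T U Q)
    {L : Language T} (hL : L.IsContextFree) : (M.image L).IsContextFree := by
  obtain ⟨g, rfl⟩ := hL
  exact ⟨M.productGrammar g, language_productGrammar⟩

end Transducer

section Evaluation

variable {A S : Type*} [Semigroup S] (f : A → S)

theorem evalW_append (u v : List A) : evalW f (u ++ v) = evalW f u * evalW f v := by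
  simp [evalW]

theorem exists_evalW_eq_coe {w : List A} (hw : w ≠ []) : ∃ s : S, evalW f w = s := by
  induction w with
  | nil => exact absurd rfl hw
  | cons a w ih =>
    rcases eq_or_ne w [] with rfl | hw'
    · exact ⟨f a, by simp [evalW]⟩
    · obtain ⟨s, hs⟩ := ih hw'
      exact ⟨f a * s, by rw [← List.singleton_append, evalW_append, hs]; simp [evalW]⟩

theorem evalW_ne_one {w : List A} (hw : w ≠ []) : evalW f w ≠ 1 := by
  obtain ⟨s, hs⟩ := exists_evalW_eq_coe f hw
  simp [hs]

variable {f} {e : S} {w : List A}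

theorem evalW_identity_append (hid : ∀ s : S, s * e = s ∧ e * s = s) (hw : evalW f w = e)
    {v : List A} (hv : v ≠ []) : evalW f (w ++ v) = evalW f v := by
  obtain ⟨s, hs⟩ := exists_evalW_eq_coe f hv
  rw [evalW_append, hw, hs, ← WithOne.coe_mul, (hid s).2]

theorem evalW_append_identity (hid : ∀ s : S, s * e = s ∧ e * s = s) (hw : evalW f w = e)
    {u : List A} (hu : u ≠ []) : evalW f (u ++ w) = evalW f u := by
  obtain ⟨s, hs⟩ := exists_evalW_eq_coe f hu
  rw [evalW_append, hw, hs, ← WithOne.coe_mul, (hid s).1]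

end Evaluation

def tableWord {A : Type*} (u v x : List A) : List (A ⊕ Bool) :=
  u.map .inl ++ [.inr false] ++ v.map .inl ++ [.inr true] ++ (x.map .inl).reverse

theorem tableWord_eq_append_cons {A : Type*} (u v x : List A) :
    tableWord u v x =
      u.map .inl ++ .inr false :: (v.map .inl ++ .inr true :: x.reverse.map .inl) := by
  simp [tableWord]

inductive ErasePhase
  | head | middle | allHead | allMiddle | allTail
  deriving DecidableEq

inductive EraseState (k : ℕ)
  | copy
  | copyHead
  | erase (ph : ErasePhase) (i : Fin (k + 1))

instance : Fintype ErasePhase :=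
  ⟨{.head, .middle, .allHead, .allMiddle, .allTail}, fun ph => by cases ph <;> simp⟩

instance (k : ℕ) : Finite (EraseState k) :=
  Finite.of_injective
    (fun | .copy => none | .copyHead => some none | .erase ph i => some (some (ph, i)))
    (by rintro (_ | _ | ⟨_, _⟩) (_ | _ | ⟨_, _⟩) <;> simp)

namespace ErasePhase

def pattern {A : Type*} (w : List A) : ErasePhase → List A
  | allTail => w.reverse
  | _ => w

def marker : ErasePhase → Option Bool
  | head | allHead => some false
  | middle | allMiddle => some true
  | allTail => none

def next (k : ℕ) : ErasePhase → EraseState k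
  | allHead => .erase allMiddle 0
  | allMiddle => .erase allTail 0
  | _ => .copy

@[simp]
theorem length_pattern {A : Type*} (w : List A) (ph : ErasePhase) :
    (ph.pattern w).length = w.length := by
  cases ph <;> simp [pattern]

end ErasePhase

section Eraser

variable {A : Type*} [DecidableEq A] (w : List A)

def eraseStep : EraseState w.length → A ⊕ Bool → List (List (A ⊕ Bool) × EraseState w.length)
  | .copy, c => [([c], .copy)]
  | .copyHead, .inl a => [([.inl a], .copyHead)]
  | .copyHead, .inr b => if b = false then [([.inr false], .erase .middle 0)] else []
  | .erase ph i, .inl a =>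
      -- `i + 1` does not wrap around: the transition only exists for `i < w.length`.
      if (ph.pattern w)[(i : ℕ)]? = some a then [([], .erase ph (i + 1))] else []
  | .erase ph i, .inr b =>
      if (i : ℕ) = w.length ∧ ph.marker = some b then [([.inr b], ph.next w.length)] else []

/- On a table word `u #₁ v #₂ xʳ` the four start states copy it, erase `u = w`, erase `v = w`,
or erase `u = v = x = w`, keeping the markers. -/
def eraser : Transducer (A ⊕ Bool) (A ⊕ Bool) (EraseState w.length) where
  step := eraseStep w
  start := {.copy, .erase .head 0, .copyHead, .erase .allHead 0}
  accept := {.copy, .erase .allTail (Fin.last _)}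

@[simp]
theorem eraser_step : (eraser w).step = eraseStep w :=
  rfl

variable {w}

open Transducer

theorem eraser_run_copy_iff {u y : List (A ⊕ Bool)} {q : EraseState w.length} :
    (eraser w).Run .copy u y q ↔ y = u ∧ q = .copy := by
  induction u generalizing y with
  | nil => simp [run_nil_iff]
  | cons c u ih => simp [run_cons_iff, eraseStep, ih, and_comm]

theorem eraser_run_copyHead_iff {u : List A} {y : List (A ⊕ Bool)} {q : EraseState w.length} :
    (eraser w).Run .copyHead (u.map .inl) y q ↔ y = u.map .inl ∧ q = .copyHead := by
  induction u generalizing y with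
  | nil => simp [run_nil_iff]
  | cons a u ih => simp [run_cons_iff, eraseStep, ih, and_comm]

theorem eraser_run_erase_iff {ph : ErasePhase} {i : Fin (w.length + 1)} {u : List A}
    {y : List (A ⊕ Bool)} {q : EraseState w.length} :
    (eraser w).Run (.erase ph i) (u.map .inl) y q ↔
      y = [] ∧ ∃ j : Fin (w.length + 1),
        (ph.pattern w).drop i = u ++ (ph.pattern w).drop j ∧ q = .erase ph j := by
  induction u generalizing i y with
  | nil =>
    have hdrop : ∀ j : Fin (w.length + 1),
        (ph.pattern w).drop i = (ph.pattern w).drop j → i = j :=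
      fun j h => by have := congrArg List.length h; simp at this; omega
    simp only [List.map_nil, run_nil_iff, List.nil_append]
    constructor
    · rintro ⟨rfl, rfl⟩
      exact ⟨rfl, i, rfl, rfl⟩
    · rintro ⟨rfl, j, h, rfl⟩
      exact ⟨rfl, by rw [hdrop j h]⟩
  | cons a u ih =>
    simp only [List.map_cons, run_cons_iff, eraser_step, eraseStep, List.cons_append,
      List.drop_eq_cons_iff]
    by_cases ha : (ph.pattern w)[(i : ℕ)]? = some a
    · have hi : ((i + 1 : Fin _) : ℕ) = i + 1 := by
        refine Fin.val_add_one_of_lt ?_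
        have := (List.getElem?_eq_some_iff.1 ha).1
        simp [Fin.lt_def] at this ⊢; omega
      simp [ha, hi, ih, and_comm]
    · simp [ha]

theorem eraser_run_erase_marker_iff {ph : ErasePhase} {i : Fin (w.length + 1)} {u : List A}
    {b : Bool} {rest y : List (A ⊕ Bool)} {q : EraseState w.length} :
    (eraser w).Run (.erase ph i) (u.map .inl ++ .inr b :: rest) y q ↔
      u = (ph.pattern w).drop i ∧ ph.marker = some b ∧
        ∃ y', y = .inr b :: y' ∧ (eraser w).Run (ph.next w.length) rest y' q := by
  rw [run_append_iff]
  constructor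
  · rintro ⟨_, _, _, hu, hrun, rfl⟩
    obtain ⟨rfl, j, hj, rfl⟩ := eraser_run_erase_iff.1 hu
    obtain ⟨o, q', y', hstep, hrun, rfl⟩ := run_cons_iff.1 hrun
    simp only [eraser_step, eraseStep] at hstep
    split_ifs at hstep with hjb
    · obtain ⟨rfl, rfl⟩ := List.mem_singleton.1 hstep
      have hj₀ : (ph.pattern w).drop j = [] := List.drop_eq_nil_of_le (by simp [hjb.1])
      rw [hj₀, List.append_nil] at hj
      exact ⟨hj.symm, hjb.2, y', rfl, hrun⟩
    · cases hstep
  · rintro ⟨rfl, hb, y', rfl, hrun⟩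
    refine ⟨_, [], _, eraser_run_erase_iff.2 ⟨rfl, Fin.last _, by simp, rfl⟩,
      .cons (o := [.inr b]) (by simp [eraseStep, hb]) hrun, rfl⟩

theorem eraser_run_copyHead_marker_iff {u : List A} {b : Bool} {rest y : List (A ⊕ Bool)}
    {q : EraseState w.length} :
    (eraser w).Run .copyHead (u.map .inl ++ .inr b :: rest) y q ↔
      b = false ∧ ∃ y', y = u.map .inl ++ .inr false :: y' ∧
        (eraser w).Run (.erase .middle 0) rest y' q := by
  rw [run_append_iff]
  simp only [eraser_run_copyHead_iff, run_cons_iff, eraser_step, eraseStep, ↓existsAndEq,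
    List.mem_ite_nil_right, List.mem_singleton, Prod.mk.injEq, and_true, true_and,
    List.cons_append, List.nil_append]
  constructor
  · rintro ⟨y', ⟨rfl, hrun⟩, rfl⟩
    exact ⟨rfl, y', rfl, hrun⟩
  · rintro ⟨rfl, y', rfl, hrun⟩
    exact ⟨y', ⟨rfl, hrun⟩, rfl⟩

theorem eraser_transduces_tableWord_iff {u v x : List A} {y : List (A ⊕ Bool)} :
    (eraser w).Transduces (tableWord u v x) y ↔
      y = tableWord u v x ∨ (u = w ∧ y = tableWord [] v x) ∨ (v = w ∧ y = tableWord u [] x) ∨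
        (u = w ∧ v = w ∧ x = w ∧ y = tableWord [] [] []) := by
  have hstart : (eraser w).start = {.copy, .erase .head 0, .copyHead, .erase .allHead 0} := rfl
  have haccept : (eraser w).accept = {.copy, .erase .allTail (Fin.last _)} := rfl
  simp only [Transduces, hstart, haccept, Set.mem_insert_iff, Set.mem_singleton_iff,
    exists_eq_or_imp, tableWord_eq_append_cons, eraser_run_copy_iff,
    eraser_run_erase_marker_iff, eraser_run_copyHead_marker_iff, eraser_run_erase_iff,
    ErasePhase.pattern, ErasePhase.marker, ErasePhase.next, List.drop_zero, Fin.coe_ofNat_eq_mod,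
    Nat.zero_mod, Fin.val_last, List.length_reverse, List.drop_eq_nil_of_le, Std.le_refl,
    List.reverse_eq_append_iff, List.reverse_reverse, List.reverse_nil, List.nil_append,
    List.map_nil, EraseState.erase.injEq, reduceCtorEq, ↓existsAndEq, exists_eq_right,
    exists_eq_right', exists_eq_right_right, exists_const, and_true, and_false, true_and,
    or_false, false_or]
  grind

end Eraser

theorem mem_tableS {A S : Type*} [Semigroup S] {f : A → S} {R : Language A}
    {y : List (A ⊕ Bool)} :
    y ∈ tableS f R ↔ ∃ u v x, u ∈ R ∧ v ∈ R ∧ x ∈ R ∧ evalW f (u ++ v) = evalW f x ∧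
      y = tableWord u v x :=
  Iff.rfl

theorem tableS_add_nil_eq_image {A S : Type*} [DecidableEq A] [Semigroup S] {f : A → S}
    {R : Language A} (hR : ∀ w ∈ R, w ≠ []) {e : S} (hid : ∀ s : S, s * e = s ∧ e * s = s)
    {w : List A} (hwR : w ∈ R) (hw : evalW f w = e) :
    tableS f (R + {[]}) = (eraser w).image (tableS f R) := by
  ext y
  simp only [Transducer.mem_image, mem_tableS]
  constructor
  · rintro ⟨u, v, x, hu, hv, hx, huv, rfl⟩
    simp only [Language.mem_add] at hu hv hx
    rcases hx with hx | rfl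
    · rcases hu with hu | rfl <;> rcases hv with hv | rfl
      · exact ⟨_, ⟨u, v, x, hu, hv, hx, huv, rfl⟩, eraser_transduces_tableWord_iff.2 (.inl rfl)⟩
      · refine ⟨_, ⟨u, w, x, hu, hwR, hx, ?_, rfl⟩,
          eraser_transduces_tableWord_iff.2 (.inr (.inr (.inl ⟨rfl, rfl⟩)))⟩
        rwa [evalW_append_identity hid hw (hR u hu), ← List.append_nil u]
      · refine ⟨_, ⟨w, v, x, hwR, hv, hx, ?_, rfl⟩,
          eraser_transduces_tableWord_iff.2 (.inr (.inl ⟨rfl, rfl⟩))⟩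
        rwa [evalW_identity_append hid hw (hR v hv), ← List.nil_append v]
      · exact absurd huv.symm (evalW_ne_one f (hR x hx))
    · obtain ⟨rfl, rfl⟩ : u = [] ∧ v = [] := List.append_eq_nil_iff.1 (by
        by_contra h
        exact evalW_ne_one f h huv)
      refine ⟨_, ⟨w, w, w, hwR, hwR, hwR, ?_, rfl⟩,
        eraser_transduces_tableWord_iff.2 (.inr (.inr (.inr ⟨rfl, rfl, rfl, rfl⟩)))⟩
      exact evalW_append_identity hid hw (hR w hwR)
  · rintro ⟨_, ⟨u, v, x, hu, hv, hx, huv, rfl⟩, htr⟩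
    have hR' : ∀ z ∈ R, z ∈ R + {[]} := fun z hz => (Language.mem_add _ _ _).2 (.inl hz)
    have hnil : [] ∈ R + {[]} := (Language.mem_add _ _ _).2 (.inr rfl)
    rcases eraser_transduces_tableWord_iff.1 htr with
      rfl | ⟨rfl, rfl⟩ | ⟨rfl, rfl⟩ | ⟨rfl, rfl, rfl, rfl⟩
    · exact ⟨u, v, x, hR' u hu, hR' v hv, hR' x hx, huv, rfl⟩
    · refine ⟨[], v, x, hnil, hR' v hv, hR' x hx, ?_, rfl⟩
      rwa [List.nil_append, ← evalW_identity_append hid hw (hR v hv)]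
    · refine ⟨u, [], x, hR' u hu, hnil, hR' x hx, ?_, rfl⟩
      rwa [List.append_nil, ← evalW_append_identity hid hw (hR u hu)]
    · exact ⟨[], [], [], hnil, hnil, hnil, rfl, rfl⟩

theorem monoid_one_extendable_general {A S : Type*} [Semigroup S]
    (f : A → S)
    (R : Language A) (hRne : ∀ w ∈ R, w ≠ [])
    (hreg : R.IsRegular)
    (hcomb : ∀ s : S, ∃ w ∈ R, evalW f w = ↑s)
    (htab : (tableS f R).IsContextFree)
    (hmon : ∃ e : S, ∀ s : S, s * e = s ∧ e * s = s) :
    (R + {[]} : Language A).IsRegular ∧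
    (∀ x : WithOne S, ∃ w ∈ (R + {[]} : Language A), evalW f w = x) ∧
    (tableS f (R + {[]})).IsContextFree := by
  classical
  obtain ⟨e, hid⟩ := hmon
  obtain ⟨w, hwR, hw⟩ := hcomb e
  refine ⟨hreg.add (Language.one_def ▸ Language.isRegular_one), ?_, ?_⟩
  · intro x
    induction x using WithOne.recOneCoe with
    | one => exact ⟨[], (Language.mem_add _ _ _).2 (.inr rfl), rfl⟩
    | coe s =>
      obtain ⟨v, hvR, hv⟩ := hcomb s
      exact ⟨v, (Language.mem_add _ _ _).2 (.inl hvR), hv⟩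
  · rw [tableS_add_nil_eq_image hRne hid hwR hw]
    exact (eraser w).isContextFree_image htab

/-- Every monoid (here: semigroup with a two-sided identity element) that is
word-hyperbolic as a semigroup, with respect to a regular combing `R ⊆ A⁺`, is
`1`-extendable: `S^1` is word-hyperbolic with respect to `R ∪ {ε}`. -/
theorem monoid_one_extendable {A S : Type*} [Fintype A] [Semigroup S]
    (f : A → S)
    (hgen : ∀ s : S, ∃ w : List A, w ≠ [] ∧ evalW f w = ↑s)
    (R : Language A) (hRne : ∀ w ∈ R, w ≠ [])
    (hreg : R.IsRegular)
    (hcomb : ∀ s : S, ∃ w ∈ R, evalW f w = ↑s)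
    (htab : (tableS f R).IsContextFree)
    (hmon : ∃ e : S, ∀ s : S, s * e = s ∧ e * s = s) :
    (R + {[]} : Language A).IsRegular ∧
    (∀ x : WithOne S, ∃ w ∈ (R + {[]} : Language A), evalW f w = x) ∧
    (tableS f (R + {[]})).IsContextFree :=
  monoid_one_extendable_general f R hRne hreg hcomb htab hmon
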